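/- arXiv:2009.04655 — 7 statements merged into one kernel-verified Lean document; each statement's English description precedes it below -/
import Mathlib

section
/- Let C = (R_1,T_1),…,(R_k,T_k) be an OV, let 1 ≤ i < k, and let T_sp be a real number with T_i < T_sp < T_{i+1}. Then the sequence split(C, T_sp) = (R_1,T_1), …, (R_i,T_i), (R_i,T_sp), (R_{i+1},T_{i+1}), …, (R_k,T_k) is again an OV (its time points are strictly increasing) and it represents the same set of space-time as C, i.e. ⟦split(C, T_sp)⟧ = ⟦C⟧. -/
open Set

/-- The semantics of an operation volume (OV) with regions `R` and strictly
increasing time points `T`: the subset of space-time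
`(⋃_{i<k} R_i × [T_i, T_{i+1})) ∪ (R_last × [T_last, ∞))`. -/
def OVsem {k : ℕ} (R : Fin (k + 1) → Set (Fin 3 → ℝ)) (T : Fin (k + 1) → ℝ) :
    Set ((Fin 3 → ℝ) × ℝ) :=
  (⋃ i : Fin k,
      {p : (Fin 3 → ℝ) × ℝ | p.1 ∈ R i.castSucc ∧ T i.castSucc ≤ p.2 ∧ p.2 < T i.succ}) ∪
    {p : (Fin 3 → ℝ) × ℝ | p.1 ∈ R (Fin.last k) ∧ T (Fin.last k) ≤ p.2}

lemma insertNth_val_eq {α : Type*} {n : ℕ} (p : Fin (n+1)) (x : α) (f : Fin n → α) (q : Fin (n+1)) :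
    Fin.insertNth (α := fun _ => α) p x f q =
      if h : (q:ℕ) < p then f ⟨q, by omega⟩
      else if h2 : (q:ℕ) = p then x else f ⟨(q:ℕ) - 1, by omega⟩ := by
  rcases lt_trichotomy (q:ℕ) (p:ℕ) with h | h | h
  · have hq : q = p.succAbove ⟨q, by omega⟩ := by
      rw [Fin.succAbove_of_castSucc_lt]
      · rfl
      · exact Fin.lt_def.mpr (by simpa using h)
    conv_lhs => rw [hq]
    rw [Fin.insertNth_apply_succAbove]
    simp [h]
  · have : q = p := Fin.ext h
    subst this
    simp [h, Fin.insertNth_apply_same]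
  · have hq : q = p.succAbove ⟨(q:ℕ)-1, by omega⟩ := by
      rw [Fin.succAbove_of_le_castSucc]
      · ext; simp; omega
      · rw [Fin.le_def]; simp; omega
    conv_lhs => rw [hq]
    rw [Fin.insertNth_apply_succAbove]
    rw [dif_neg (by omega), dif_neg (by omega)]

/-- Splitting an OV at a time `T_sp` with `T_i < T_sp < T_{i+1}` (inserting the
pair `(R_i, T_sp)` between positions `i` and `i+1`) yields an OV (strictly
increasing time points) with the same space-time semantics. -/
theorem split_isOV_and_sem_eq {k : ℕ}
    (R : Fin (k + 1) → Set (Fin 3 → ℝ)) (T : Fin (k + 1) → ℝ)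
    (hT : StrictMono T) (i : Fin k) (Tsp : ℝ)
    (h1 : T i.castSucc < Tsp) (h2 : Tsp < T i.succ) :
    StrictMono (Fin.insertNth i.succ.castSucc Tsp T) ∧
      OVsem (Fin.insertNth i.succ.castSucc (R i.castSucc) R)
        (Fin.insertNth i.succ.castSucc Tsp T) = OVsem R T := by
  have hik : (i:ℕ) < k := i.isLt
  have hp : ((i.succ.castSucc : Fin (k+2)) : ℕ) = (i:ℕ) + 1 := rfl
  have hmono : ∀ (a b : ℕ) (ha : a < k+1) (hb : b < k+1), a < b → T ⟨a,ha⟩ < T ⟨b,hb⟩ :=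
    fun a b ha hb h => hT (Fin.mk_lt_mk.mpr h)
  have hle : ∀ (a b : ℕ) (ha : a < k+1) (hb : b < k+1), a ≤ b → T ⟨a,ha⟩ ≤ T ⟨b,hb⟩ :=
    fun a b ha hb h => hT.monotone (Fin.mk_le_mk.mpr h)
  have h1' : ∀ (ha : (i:ℕ) < k+1), T ⟨i, ha⟩ < Tsp := fun _ => h1
  have h2' : ∀ (hb : (i:ℕ)+1 < k+1), Tsp < T ⟨(i:ℕ)+1, hb⟩ := fun _ => h2
  constructor
  · rw [Fin.strictMono_iff_lt_succ]
    intro j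
    rw [insertNth_val_eq, insertNth_val_eq]
    simp only [hp, Fin.coe_castSucc, Fin.val_succ]
    split_ifs <;>
      first
        | omega
        | exact hmono _ _ _ _ (by omega)
        | exact lt_of_le_of_lt (hle _ _ _ _ (by omega)) (h1' (by omega))
        | exact lt_of_lt_of_le (h2' (by omega)) (hle _ _ _ _ (by omega))
  · ext ⟨x, t⟩
    simp only [OVsem, Set.mem_union, Set.mem_iUnion, Set.mem_setOf_eq]
    constructor
    · rintro (⟨j, hx, ht1, ht2⟩ | ⟨hx, ht⟩)
      · rw [insertNth_val_eq] at hx ht1 ht2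
        simp only [hp, Fin.coe_castSucc, Fin.val_succ] at hx ht1 ht2
        split_ifs at hx ht1 ht2 with c1 d1 d2 c2 d1' d2'
        · -- j+1 ≤ i : both below
          exact Or.inl ⟨⟨(j:ℕ), by omega⟩, hx, ht1, ht2⟩
        · -- j = i : interval [T_i, Tsp)
          exact Or.inl ⟨⟨(j:ℕ), by omega⟩, hx, ht1,
            ht2.trans (lt_of_lt_of_le (h2' (by omega)) (hle _ _ _ _ (by omega)))⟩
        · omega
        · omega
        · omega
        · -- j = i+1 : interval [Tsp, T_{i+1})
          refine Or.inl ⟨⟨(i:ℕ), by omega⟩, hx, le_of_lt (lt_of_lt_of_le (h1' (by omega)) ht1),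
            lt_of_lt_of_le ht2 (hle _ _ _ _ (by omega))⟩
        · omega
        · omega
        · -- j ≥ i+2
          exact Or.inl ⟨⟨(j:ℕ) - 1, by omega⟩, hx, ht1,
            lt_of_lt_of_le ht2 (hle _ _ _ _ (by omega))⟩
      · rw [insertNth_val_eq] at hx ht
        simp only [hp, Fin.val_last] at hx ht
        rw [dif_neg (by omega), dif_neg (by omega)] at hx ht
        exact Or.inr ⟨hx, ht⟩
    · rintro (⟨j, hx, ht1, ht2⟩ | ⟨hx, ht⟩)
      · rcases lt_trichotomy (j:ℕ) (i:ℕ) with h | h | h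
        · refine Or.inl ⟨⟨(j:ℕ), by omega⟩, ?_, ?_, ?_⟩ <;>
            rw [insertNth_val_eq] <;>
            simp only [hp, Fin.coe_castSucc, Fin.val_succ]
          · rw [dif_pos (by omega)]; exact hx
          · rw [dif_pos (by omega)]; exact ht1
          · rw [dif_pos (by omega)]; exact ht2
        · -- j = i : split into two cases on t vs Tsp
          rcases lt_or_ge t Tsp with htc | htc
          · refine Or.inl ⟨⟨(j:ℕ), by omega⟩, ?_, ?_, ?_⟩ <;>
              rw [insertNth_val_eq] <;>
              simp only [hp, Fin.coe_castSucc, Fin.val_succ]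
            · rw [dif_pos (by omega)]; exact hx
            · rw [dif_pos (by omega)]; exact ht1
            · rw [dif_neg (by omega), dif_pos (by omega)]; exact htc
          · refine Or.inl ⟨⟨(j:ℕ)+1, by omega⟩, ?_, ?_, ?_⟩ <;>
              rw [insertNth_val_eq] <;>
              simp only [hp, Fin.coe_castSucc, Fin.val_succ]
            · rw [dif_neg (by omega), dif_pos (by omega)]
              have : i.castSucc = (⟨(j:ℕ), by omega⟩ : Fin (k+1)) := Fin.ext (by simp; omega)
              rw [this]; exact hx
            · rw [dif_neg (by omega), dif_pos (by omega)]; exact htc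
            · rw [dif_neg (by omega), dif_neg (by omega)]
              exact lt_of_lt_of_le ht2 (hle _ _ _ _ (by omega))
        · refine Or.inl ⟨⟨(j:ℕ)+1, by omega⟩, ?_, ?_, ?_⟩ <;>
            rw [insertNth_val_eq] <;>
            simp only [hp, Fin.coe_castSucc, Fin.val_succ]
          · rw [dif_neg (by omega), dif_neg (by omega)]
            exact hx
          · rw [dif_neg (by omega), dif_neg (by omega)]
            exact le_trans (hle _ _ _ _ (by omega)) ht1
          · rw [dif_neg (by omega), dif_neg (by omega)]
            exact lt_of_lt_of_le ht2 (hle _ _ _ _ (by omega))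
      · refine Or.inr ⟨?_, ?_⟩ <;>
          rw [insertNth_val_eq] <;>
          simp only [hp, Fin.val_last] <;>
          rw [dif_neg (by omega), dif_neg (by omega)]
        · exact hx
        · exact ht
end

section
/- For every OV C = (R_1,T_1),…,(R_k,T_k) and every real time point T, the sequence insert(C, T) is again an OV and it represents the same set of space-time as C, i.e. ⟦insert(C, T)⟧ = ⟦C⟧. -/
open Set

/-- `insert(C, t)`: prepend `(∅, t)` if `t < T_1`, insert `(R_i, t)` if
`T_i < t < T_{i+1}` for some `i < k`, append `(R_k, t)` if `t > T_k`, and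
return `C` unchanged otherwise. -/
noncomputable def OVinsert {k : ℕ} (R : Fin (k + 1) → Set (Fin 3 → ℝ))
    (T : Fin (k + 1) → ℝ) (t : ℝ) :
    Σ m : ℕ, (Fin (m + 1) → Set (Fin 3 → ℝ)) × (Fin (m + 1) → ℝ) :=
  if t < T 0 then
    ⟨k + 1, (Fin.cons (∅ : Set (Fin 3 → ℝ)) R, Fin.cons t T)⟩
  else if h : ∃ i : Fin k, T i.castSucc < t ∧ t < T i.succ then
    ⟨k + 1, (Fin.insertNth h.choose.succ.castSucc (R h.choose.castSucc) R,
      Fin.insertNth h.choose.succ.castSucc t T)⟩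
  else if T (Fin.last k) < t then
    ⟨k + 1, (Fin.snoc R (R (Fin.last k)), Fin.snoc T t)⟩
  else ⟨k, (R, T)⟩

/-!
Say the `i`-th pair of an OV is *active* at time `s` if `T i ≤ s < T j` for all later `j`. At
most one pair is active at any time, and `(x, s) ∈ ⟦C⟧` iff `x` lies in the region of the pair
active at `s`. Hence inserting a time point `t` together with the region `{x | (x, t) ∈ ⟦C⟧}`
in force at `t` changes nothing: before `t` the same pairs are active as before, and from `t`
on the new pair carries the region that was in force anyway. In the three non-trivial cases
of `insert` that region is `∅`, `R_i` and `R_k`.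
-/

def OVActive {n : ℕ} (T : Fin n → ℝ) (i : Fin n) (s : ℝ) : Prop :=
  T i ≤ s ∧ ∀ j, i < j → s < T j

section Active

variable {n : ℕ} {T : Fin n → ℝ} {i : Fin n} {s : ℝ}

lemma OVActive.unique {j : Fin n} (hi : OVActive T i s) (hj : OVActive T j s) : i = j := by
  by_contra hne
  rcases lt_or_gt_of_ne hne with h | h
  · exact (hj.1.trans_lt (hi.2 j h)).false
  · exact (hi.1.trans_lt (hj.2 i h)).false

lemma OVActive.of_insertNth {p : Fin (n + 1)} {t : ℝ}
    (h : OVActive (p.insertNth t T) (p.succAbove i) s) : OVActive T i s := by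
  refine ⟨by simpa using h.1, fun j hj => ?_⟩
  simpa using h.2 (p.succAbove j) (Fin.succAbove_lt_succAbove_iff.2 hj)

lemma OVActive.insertNth {p : Fin (n + 1)} {t : ℝ} (h : OVActive T i s)
    (hpt : p < p.succAbove i ∨ s < t) : OVActive (p.insertNth t T) (p.succAbove i) s := by
  refine ⟨by simpa using h.1, fun j' hj' => ?_⟩
  rcases p.eq_self_or_eq_succAbove j' with rfl | ⟨j, rfl⟩
  · simpa using hpt.resolve_left (lt_asymm hj')
  · simpa using h.2 j (Fin.succAbove_lt_succAbove_iff.1 hj')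

end Active

section Semantics

variable {k : ℕ} {R : Fin (k + 1) → Set (Fin 3 → ℝ)} {T : Fin (k + 1) → ℝ}
  {x : Fin 3 → ℝ} {s : ℝ}

lemma mem_OVsem_iff (hT : Monotone T) : (x, s) ∈ OVsem R T ↔ ∃ i, OVActive T i s ∧ x ∈ R i := by
  constructor
  · rintro (h | h)
    · obtain ⟨i, hx, hle, hlt⟩ := mem_iUnion.1 h
      exact ⟨i.castSucc, ⟨hle, fun j hj =>
        hlt.trans_le (hT (Fin.castSucc_lt_iff_succ_le.1 hj))⟩, hx⟩
    · exact ⟨Fin.last k, ⟨h.2, fun j hj => absurd hj (Fin.le_last j).not_gt⟩, h.1⟩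
  · rintro ⟨i, ⟨hle, hlt⟩, hx⟩
    rcases i.eq_castSucc_or_eq_last with ⟨m, rfl⟩ | rfl
    · exact Or.inl (mem_iUnion.2 ⟨m, hx, hle, hlt _ m.castSucc_lt_succ⟩)
    · exact Or.inr ⟨hx, hle⟩

lemma mem_OVsem_iff_of_active (hT : Monotone T) {i : Fin (k + 1)} (hi : OVActive T i s) :
    (x, s) ∈ OVsem R T ↔ x ∈ R i := by
  rw [mem_OVsem_iff hT]
  exact ⟨fun ⟨j, hj, hx⟩ => hj.unique hi ▸ hx, fun hx => ⟨i, hi, hx⟩⟩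

lemma notMem_OVsem_of_lt (hT : Monotone T) (hs : s < T 0) : (x, s) ∉ OVsem R T := by
  rw [mem_OVsem_iff hT]
  rintro ⟨i, ⟨hle, -⟩, -⟩
  exact (hle.trans_lt hs).not_ge (hT (Fin.zero_le i))

theorem OVsem_insertNth {p : Fin (k + 2)} {t : ℝ} {r : Set (Fin 3 → ℝ)}
    (hT' : Monotone (p.insertNth t T)) (hr : ∀ x, x ∈ r ↔ (x, t) ∈ OVsem R T) :
    OVsem (p.insertNth r R) (p.insertNth t T) = OVsem R T := by
  have hT : Monotone T := by
    simpa [Function.comp_def] using hT'.comp (Fin.strictMono_succAbove p).monotone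
  have hle_t (i : Fin (k + 1)) (hi : p.succAbove i < p) : T i ≤ t := by
    simpa using hT' hi.le
  ext ⟨x, s⟩
  rw [mem_OVsem_iff hT', mem_OVsem_iff hT]
  constructor
  · rintro ⟨i', hi', hx⟩
    rcases p.eq_self_or_eq_succAbove i' with hi'p | ⟨i, rfl⟩
    · subst i'
      have hts : t ≤ s := by simpa using hi'.1
      obtain ⟨i, ⟨hit, hti⟩, hxi⟩ := (mem_OVsem_iff hT).1 ((hr x).1 (by simpa using hx))
      refine ⟨i, ⟨hit.trans hts, fun j hj => ?_⟩, hxi⟩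
      rcases (Fin.succAbove_ne p j).lt_or_gt with hjp | hjp
      · exact absurd (hle_t j hjp) (hti j hj).not_ge
      · simpa using hi'.2 _ hjp
    · exact ⟨i, hi'.of_insertNth, by simpa using hx⟩
  · rintro ⟨i, hi, hx⟩
    by_cases hpt : p < p.succAbove i ∨ s < t
    · exact ⟨p.succAbove i, hi.insertNth hpt, by simpa using hx⟩
    · push Not at hpt
      obtain ⟨hip_le, hts⟩ := hpt
      have hip : p.succAbove i < p := hip_le.lt_of_ne (Fin.succAbove_ne p i)
      refine ⟨p, ⟨by simpa using hts, fun j' hj' => ?_⟩, ?_⟩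
      · obtain ⟨j, rfl⟩ := Fin.exists_succAbove_eq hj'.ne'
        simpa using hi.2 j (Fin.succAbove_lt_succAbove_iff.1 (hip.trans hj'))
      · rw [Fin.insertNth_apply_same, hr]
        exact (mem_OVsem_iff hT).2
          ⟨i, ⟨hle_t i hip, fun j hj => hts.trans_lt (hi.2 j hj)⟩, hx⟩

end Semantics

/-- For every OV `C` and every real time point `t`, `insert(C, t)` is again an
OV (strictly increasing time points) and represents the same set of space-time
as `C`. -/
theorem insert_isOV_and_sem_eq {k : ℕ}
    (R : Fin (k + 1) → Set (Fin 3 → ℝ)) (T : Fin (k + 1) → ℝ)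
    (hT : StrictMono T) (t : ℝ) :
    StrictMono (OVinsert R T t).2.2 ∧
      OVsem (OVinsert R T t).2.1 (OVinsert R T t).2.2 = OVsem R T := by
  unfold OVinsert
  by_cases hfirst : t < T 0
  · rw [if_pos hfirst, ← Fin.insertNth_zero', ← Fin.insertNth_zero']
    have hT' := Fin.strictMono_insertNth_zero hT t hfirst
    exact ⟨hT', OVsem_insertNth hT'.monotone fun x =>
      iff_of_false (notMem_empty x) (notMem_OVsem_of_lt hT.monotone hfirst)⟩
  rw [if_neg hfirst]
  by_cases hsplit : ∃ i : Fin k, T i.castSucc < t ∧ t < T i.succ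
  · rw [dif_pos hsplit, ← Fin.succ_castSucc]
    obtain ⟨hlo, hhi⟩ := hsplit.choose_spec
    have hT' := Fin.strictMono_insertNth hT _ t hlo hhi
    have hactive : OVActive T hsplit.choose.castSucc t :=
      ⟨hlo.le, fun j hj => hhi.trans_le (hT.monotone (Fin.castSucc_lt_iff_succ_le.1 hj))⟩
    exact ⟨hT', OVsem_insertNth hT'.monotone fun x =>
      (mem_OVsem_iff_of_active hT.monotone hactive).symm⟩
  rw [dif_neg hsplit]
  by_cases hlast : T (Fin.last k) < t
  · rw [if_pos hlast, ← Fin.insertNth_last', ← Fin.insertNth_last']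
    have hT' := Fin.strictMono_insertNth_last hT t hlast
    have hactive : OVActive T (Fin.last k) t :=
      ⟨hlast.le, fun j hj => absurd hj (Fin.le_last j).not_gt⟩
    exact ⟨hT', OVsem_insertNth hT'.monotone fun x =>
      (mem_OVsem_iff_of_active hT.monotone hactive).symm⟩
  rw [if_neg hlast]
  exact ⟨hT, rfl⟩
end

section
/- For any two OVs C^a and C^b there exist time-aligned OVs D^a and D^b (i.e. D^a and D^b use the same sequence of time points) such that ⟦D^a⟧ = ⟦C^a⟧ and ⟦D^b⟧ = ⟦C^b⟧. -/
open Set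

/-!
For monotone time points, the semantics of an OV is `{(r, t) | r ∈ regionAt R T t}`, where
`regionAt R T t` is the region of the last time point `≤ t`. Merge the time points of both OVs
into one increasing sequence `U` and give each new OV the regions `regionAt R T (U j)`: since
every old time point occurs among the `U j`, the region of the last `U j ≤ t` is still
`regionAt R T t`.
-/

def regionAt {ι α β : Type*} [Preorder ι] [Preorder β] (R : ι → Set α) (T : ι → β) (t : β) :
    Set α :=
  {r | ∃ i, r ∈ R i ∧ T i ≤ t ∧ ∀ j, T j ≤ t → j ≤ i}

theorem OVsem_eq_setOf_mem_regionAt {k : ℕ} (R : Fin (k + 1) → Set (Fin 3 → ℝ))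
    {T : Fin (k + 1) → ℝ} (hT : Monotone T) :
    OVsem R T = {p | p.1 ∈ regionAt R T p.2} := by
  ext ⟨r, t⟩
  simp only [OVsem, regionAt, mem_union, mem_iUnion, mem_ofPred_eq]
  constructor
  · rintro (⟨i, hr, hle, hlt⟩ | ⟨hr, hle⟩)
    · refine ⟨i.castSucc, hr, hle, fun j hj => ?_⟩
      have : j < i.succ := lt_of_not_ge fun hij => (hlt.trans_le (hT hij)).not_ge hj
      exact Fin.le_castSucc_iff.mpr this
    · exact ⟨Fin.last k, hr, hle, fun j _ => Fin.le_last j⟩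
  · rintro ⟨i, hr, hle, hgreatest⟩
    rcases Fin.eq_castSucc_or_eq_last i with ⟨i, rfl⟩ | rfl
    · refine Or.inl ⟨i, hr, hle, lt_of_not_ge fun hsucc => ?_⟩
      exact (hgreatest i.succ hsucc).not_gt Fin.castSucc_lt_succ
    · exact Or.inr ⟨hr, hle⟩

theorem regionAt_regionAt_of_range_subset {ι κ α β : Type*} [Preorder ι] [LinearOrder κ]
    [Finite κ] [Preorder β] (R : ι → Set α) (T : ι → β) {U : κ → β} (hU : Monotone U)
    (hTU : range T ⊆ range U) (t : β) :
    regionAt (fun j => regionAt R T (U j)) U t = regionAt R T t := by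
  ext r
  constructor
  · rintro ⟨j, ⟨i, hr, hTi, hi⟩, hUj, hj⟩
    refine ⟨i, hr, hTi.trans hUj, fun i' hi' => hi i' ?_⟩
    obtain ⟨j', hj'⟩ := hTU (mem_range_self i')
    exact hj' ▸ hU (hj j' (hj' ▸ hi'))
  · rintro ⟨i, hr, hTi, hi⟩
    obtain ⟨j₀, hj₀⟩ := hTU (mem_range_self i)
    have hUj₀ : U j₀ ≤ t := hj₀ ▸ hTi
    obtain ⟨j, hUj, hj⟩ := exists_max_image {j | U j ≤ t} id (toFinite _) ⟨j₀, hUj₀⟩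
    exact ⟨j, ⟨i, hr, hj₀ ▸ hU (hj j₀ hUj₀), fun i' hi' => hi i' (hi'.trans hUj)⟩, hUj, hj⟩

theorem OVsem_regionAt_of_range_subset {k m : ℕ} (R : Fin (k + 1) → Set (Fin 3 → ℝ))
    {T : Fin (k + 1) → ℝ} (hT : Monotone T) {U : Fin (m + 1) → ℝ} (hU : Monotone U)
    (hTU : range T ⊆ range U) :
    OVsem (fun j => regionAt R T (U j)) U = OVsem R T := by
  simp only [OVsem_eq_setOf_mem_regionAt _ hU, OVsem_eq_setOf_mem_regionAt _ hT,
    regionAt_regionAt_of_range_subset R T hU hTU]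

theorem Finset.exists_strictMono_fin_succ_range_eq {β : Type*} [LinearOrder β] (s : Finset β)
    (hs : s.Nonempty) : ∃ (m : ℕ) (U : Fin (m + 1) → β), StrictMono U ∧ Set.range U = s := by
  have hcard : s.card = s.card - 1 + 1 := (Nat.succ_pred_eq_of_pos hs.card_pos).symm
  exact ⟨_, s.orderEmbOfFin hcard, (s.orderEmbOfFin hcard).strictMono,
    s.range_orderEmbOfFin hcard⟩

/-- For any two OVs `C^a` and `C^b` there exist time-aligned OVs `D^a` and
`D^b` (using the same sequence of time points `U`) with the same respective
space-time semantics. -/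
theorem exists_time_aligned {ka kb : ℕ}
    (Ra : Fin (ka + 1) → Set (Fin 3 → ℝ)) (Ta : Fin (ka + 1) → ℝ) (hTa : StrictMono Ta)
    (Rb : Fin (kb + 1) → Set (Fin 3 → ℝ)) (Tb : Fin (kb + 1) → ℝ) (hTb : StrictMono Tb) :
    ∃ (m : ℕ) (Sa Sb : Fin (m + 1) → Set (Fin 3 → ℝ)) (U : Fin (m + 1) → ℝ),
      StrictMono U ∧ OVsem Sa U = OVsem Ra Ta ∧ OVsem Sb U = OVsem Rb Tb := by
  classical
  obtain ⟨m, U, hU, hUrange⟩ := Finset.exists_strictMono_fin_succ_range_eq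
    (Finset.univ.image Ta ∪ Finset.univ.image Tb) ⟨Ta 0, by simp⟩
  have hTaU : range Ta ⊆ range U := range_subset_iff.mpr fun i => by simp [hUrange]
  have hTbU : range Tb ⊆ range U := range_subset_iff.mpr fun i => by simp [hUrange]
  exact ⟨m, _, _, U, hU, OVsem_regionAt_of_range_subset Ra hTa.monotone hU.monotone hTaU,
    OVsem_regionAt_of_range_subset Rb hTb.monotone hU.monotone hTbU⟩
end

section
/- Let C^a = (R^a_1,T_1),…,(R^a_k,T_k) and C^b = (R^b_1,T_1),…,(R^b_k,T_k) be time-aligned OVs. Then C^a refines C^b, i.e. ⟦C^a⟧ ⊆ ⟦C^b⟧, if and only if the pointwise set-difference OV C^a ∖ C^b = (R^a_1 ∖ R^b_1, T_1),…,(R^a_k ∖ R^b_k, T_k) has empty semantics, i.e. ⟦C^a ∖ C^b⟧ = ∅. -/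
open Set

lemma ov_interval_unique {k : ℕ} {T : Fin (k + 1) → ℝ} (hT : StrictMono T)
    {i j : Fin k} {t : ℝ} (hi1 : T i.castSucc ≤ t) (hi2 : t < T i.succ)
    (hj1 : T j.castSucc ≤ t) (hj2 : t < T j.succ) : i = j := by
  rcases lt_trichotomy i j with h | h | h
  · have : T i.succ ≤ T j.castSucc := hT.monotone (by
      rw [Fin.lt_def] at h
      simp only [Fin.le_def, Fin.val_succ, Fin.coe_castSucc]; omega)
    linarith
  · exact h
  · have : T j.succ ≤ T i.castSucc := hT.monotone (by
      rw [Fin.lt_def] at h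
      simp only [Fin.le_def, Fin.val_succ, Fin.coe_castSucc]; omega)
    linarith

lemma ov_not_last {k : ℕ} {T : Fin (k + 1) → ℝ} (hT : StrictMono T)
    {i : Fin k} {t : ℝ} (ht : t < T i.succ) (hl : T (Fin.last k) ≤ t) : False := by
  have := hT.monotone (Fin.le_last i.succ)
  linarith

/-- For time-aligned OVs `C^a`, `C^b`: `C^a` refines `C^b`
(`⟦C^a⟧ ⊆ ⟦C^b⟧`) iff the pointwise set-difference OV has empty semantics. -/
theorem refines_iff_sdiff_empty {k : ℕ}
    (Ra Rb : Fin (k + 1) → Set (Fin 3 → ℝ)) (T : Fin (k + 1) → ℝ)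
    (hT : StrictMono T) :
    OVsem Ra T ⊆ OVsem Rb T ↔ OVsem (fun i => Ra i \ Rb i) T = ∅ := by
  constructor
  · intro h
    ext ⟨x, t⟩
    simp only [OVsem, mem_union, mem_iUnion, mem_setOf_eq, mem_empty_iff_false, iff_false,
      mem_diff]
    rintro (⟨i, ⟨hxa, hxb⟩, ht1, ht2⟩ | ⟨⟨hxa, hxb⟩, ht⟩)
    · have hA : ((x, t) : (Fin 3 → ℝ) × ℝ) ∈ OVsem Ra T :=
        Or.inl (mem_iUnion.2 ⟨i, hxa, ht1, ht2⟩)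
      rcases h hA with hB | hB
      · obtain ⟨j, hxj, hj1, hj2⟩ := mem_iUnion.1 hB
        obtain rfl := ov_interval_unique hT ht1 ht2 hj1 hj2
        exact hxb hxj
      · exact ov_not_last hT ht2 hB.2
    · have hA : ((x, t) : (Fin 3 → ℝ) × ℝ) ∈ OVsem Ra T := Or.inr ⟨hxa, ht⟩
      rcases h hA with hB | hB
      · obtain ⟨j, _, _, hj2⟩ := mem_iUnion.1 hB
        exact ov_not_last hT hj2 ht
      · exact hxb hB.1
  · intro h p hp
    by_contra hb
    have hd : p ∈ OVsem (fun i => Ra i \ Rb i) T := by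
      simp only [OVsem, mem_union, mem_iUnion, mem_setOf_eq, mem_diff] at hp hb ⊢
      rcases hp with ⟨i, hxa, ht1, ht2⟩ | ⟨hxa, ht⟩
      · exact Or.inl ⟨i, ⟨hxa, fun hx => hb (Or.inl ⟨i, hx, ht1, ht2⟩)⟩, ht1, ht2⟩
      · exact Or.inr ⟨⟨hxa, fun hx => hb (Or.inr ⟨hx, ht⟩)⟩, ht⟩
    rw [h] at hd
    exact hd
end

section
/- Let C^a = (R^a_1,T_1),…,(R^a_k,T_k) and C^b = (R^b_1,T_1),…,(R^b_k,T_k) be time-aligned OVs. Then ⟦C^a⟧ and ⟦C^b⟧ are disjoint (⟦C^a⟧ ∩ ⟦C^b⟧ = ∅) if and only if the regions are pointwise disjoint, i.e. R^a_i ∩ R^b_i = ∅ for every i ∈ {1,…,k}. -/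
/-!
An OV is the union `⋃ i, R i ×ˢ S i` over time slots `S i = {t | T i ≤ t ∧ ∀ j > i, t < T j}`.
These slots are pairwise disjoint, and nonempty since `T i ∈ S i`, so two such unions over the
same slots meet exactly when `R i` and `R' i` meet for some `i`.
-/

open Set

open Function

theorem Set.disjoint_iUnion_prod_iff {ι α β : Type*} {R R' : ι → Set α} {S : ι → Set β}
    (hS : Pairwise (Disjoint on S)) (hne : ∀ i, (S i).Nonempty) :
    Disjoint (⋃ i, R i ×ˢ S i) (⋃ i, R' i ×ˢ S i) ↔ ∀ i, Disjoint (R i) (R' i) := by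
  simp_rw [disjoint_iUnion_left, disjoint_iUnion_right, disjoint_prod]
  refine ⟨fun h i ↦ (h i i).resolve_right (not_disjoint_iff_nonempty_inter.2 ?_), fun h i j ↦ ?_⟩
  · simpa using hne i
  · rcases eq_or_ne i j with rfl | hij
    exacts [.inl (h i), .inr (hS hij)]

section timeSlot

variable {ι β : Type*} [LinearOrder ι] [Preorder β] (T : ι → β)

def timeSlot (i : ι) : Set β := {t | T i ≤ t ∧ ∀ j, i < j → t < T j}

theorem pairwise_disjoint_timeSlot : Pairwise (Disjoint on timeSlot T) := by
  refine (pairwise_disjoint_on _).2 fun i j hij ↦ disjoint_left.2 fun t hi hj ↦ ?_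
  exact (hi.2 j hij).not_ge hj.1

variable {T}

theorem self_mem_timeSlot (hT : StrictMono T) (i : ι) : T i ∈ timeSlot T i :=
  ⟨le_rfl, fun _ hij ↦ hT hij⟩

theorem timeSlot_castSucc {k : ℕ} {T : Fin (k + 1) → β} (hT : Monotone T) (i : Fin k) :
    timeSlot T i.castSucc = Ico (T i.castSucc) (T i.succ) := by
  ext t
  refine and_congr_right fun _ ↦ ⟨fun h ↦ h _ i.castSucc_lt_succ, fun h j hj ↦ ?_⟩
  exact h.trans_le (hT (Fin.castSucc_lt_iff_succ_le.1 hj))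

theorem timeSlot_last {k : ℕ} (T : Fin (k + 1) → β) :
    timeSlot T (Fin.last k) = Ici (T (Fin.last k)) := by
  ext t
  exact and_iff_left fun j hj ↦ absurd hj (Fin.le_last j).not_gt

end timeSlot

theorem OVsem_eq_iUnion_prod_timeSlot {k : ℕ} (R : Fin (k + 1) → Set (Fin 3 → ℝ))
    {T : Fin (k + 1) → ℝ} (hT : Monotone T) :
    OVsem R T = ⋃ i, R i ×ˢ timeSlot T i := by
  rw [iUnion_fin_add_one_eq_iUnion_castSucc]
  simp only [Function.comp_def, timeSlot_castSucc hT, timeSlot_last]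
  rfl

/-- For time-aligned OVs, the represented sets of space-time are disjoint iff
the regions are pointwise disjoint. -/
theorem sem_disjoint_iff {k : ℕ}
    (Ra Rb : Fin (k + 1) → Set (Fin 3 → ℝ)) (T : Fin (k + 1) → ℝ)
    (hT : StrictMono T) :
    OVsem Ra T ∩ OVsem Rb T = ∅ ↔ ∀ i : Fin (k + 1), Ra i ∩ Rb i = ∅ := by
  simp only [← disjoint_iff_inter_eq_empty, OVsem_eq_iUnion_prod_timeSlot _ hT.monotone]
  exact Set.disjoint_iUnion_prod_iff (pairwise_disjoint_timeSlot T)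
    fun i ↦ ⟨T i, self_mem_timeSlot hT i⟩
end

section
/- Let C = (R_1,T_1),…,(R_k,T_k) and D = (S_1,U_1),…,(S_m,U_m) be OVs such that C.R_all ∩ D.R_last = ∅, where C.R_all = ⋃_{i=1}^{k} R_i and D.R_last = S_m. Then for every real duration δ with T_1 + δ ≥ D.T_last = U_m, the rescheduled OV is disjoint from D: ⟦reschedule(C, δ)⟧ ∩ ⟦D⟧ = ∅. -/
open Set

/-- `reschedule(C, δ)` shifts every time point of the OV by `δ`, keeping the
regions unchanged. -/
def reschedule {k : ℕ} (R : Fin (k + 1) → Set (Fin 3 → ℝ)) (T : Fin (k + 1) → ℝ)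
    (δ : ℝ) : (Fin (k + 1) → Set (Fin 3 → ℝ)) × (Fin (k + 1) → ℝ) :=
  (R, fun i => T i + δ)

/-- If the union of all regions of OV `C = (R, T)` is disjoint from the last
region of OV `D = (S, U)`, then for every duration `δ` with
`T_1 + δ ≥ D.T_last`, the rescheduled OV `reschedule(C, δ)` is disjoint
from `D`. -/
theorem reschedule_disjoint {k m : ℕ}
    (R : Fin (k + 1) → Set (Fin 3 → ℝ)) (T : Fin (k + 1) → ℝ) (hT : StrictMono T)
    (S : Fin (m + 1) → Set (Fin 3 → ℝ)) (U : Fin (m + 1) → ℝ) (hU : StrictMono U)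
    (hdisj : (⋃ i : Fin (k + 1), R i) ∩ S (Fin.last m) = ∅)
    (δ : ℝ) (hδ : U (Fin.last m) ≤ T 0 + δ) :
    OVsem (reschedule R T δ).1 (reschedule R T δ).2 ∩ OVsem S U = ∅ := by
  ext p
  simp only [OVsem, reschedule, mem_inter_iff, mem_union, mem_iUnion, mem_setOf_eq,
    mem_empty_iff_false, iff_false]
  rintro ⟨hC, hD⟩
  -- from hC : p.1 ∈ ⋃ R i and p.2 ≥ T 0 + δ
  have hmem : p.1 ∈ ⋃ i : Fin (k + 1), R i := by
    rcases hC with ⟨i, hi, _, _⟩ | ⟨hi, _⟩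
    · exact mem_iUnion.2 ⟨i.castSucc, hi⟩
    · exact mem_iUnion.2 ⟨Fin.last k, hi⟩
  have htime : T 0 + δ ≤ p.2 := by
    rcases hC with ⟨i, _, h1, _⟩ | ⟨_, h1⟩
    · exact le_trans (by linarith [hT.monotone (Fin.zero_le i.castSucc)]) h1
    · exact le_trans (by linarith [hT.monotone (Fin.zero_le (Fin.last k))]) h1
  have hUlast : U (Fin.last m) ≤ p.2 := le_trans hδ htime
  -- so p must be in the last piece of D
  have hS : p.1 ∈ S (Fin.last m) := by
    rcases hD with ⟨j, _, _, h3⟩ | ⟨hj, _⟩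
    · exact absurd (lt_of_lt_of_le h3 (hU.monotone (Fin.le_last j.succ)))
        (not_lt.2 hUlast)
    · exact hj
  have := hdisj ▸ (mem_inter hmem hS)
  exact this
end

section
/- (Liveness, Proposition 2.) Let C be an OV with first time point T_1, and let D_1, …, D_n (n ≥ 1) be OVs such that C.R_all ∩ D_j.R_last = ∅ for every j ∈ {1,…,n}. Set δ_0 = max_{1 ≤ j ≤ n} D_j.T_last − T_1. Then for every real duration δ ≥ δ_0 and every j ∈ {1,…,n}, the rescheduled OV is disjoint from D_j: ⟦reschedule(C, δ)⟧ ∩ ⟦D_j⟧ = ∅. -/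
open Set

/-- Liveness (Proposition 2): if the union of all regions of OV `C = (R, T)`
is disjoint from the last region of each OV `D_j = (S j, U j)` (`1 ≤ j ≤ n`),
then, with `δ₀ = max_j (D_j).T_last − T_1`, for every `δ ≥ δ₀` and every `j`,
the rescheduled OV `reschedule(C, δ)` is disjoint from `D_j`. -/
theorem liveness {k n : ℕ}
    (R : Fin (k + 1) → Set (Fin 3 → ℝ)) (T : Fin (k + 1) → ℝ) (hT : StrictMono T)
    (m : Fin (n + 1) → ℕ)
    (S : (j : Fin (n + 1)) → Fin (m j + 1) → Set (Fin 3 → ℝ))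
    (U : (j : Fin (n + 1)) → Fin (m j + 1) → ℝ)
    (hU : ∀ j, StrictMono (U j))
    (hdisj : ∀ j, (⋃ i : Fin (k + 1), R i) ∩ S j (Fin.last (m j)) = ∅) :
    ∀ δ : ℝ,
      (Finset.univ.sup' Finset.univ_nonempty fun j => U j (Fin.last (m j))) - T 0 ≤ δ →
      ∀ j : Fin (n + 1),
        OVsem (reschedule R T δ).1 (reschedule R T δ).2 ∩ OVsem (S j) (U j) = ∅ := by
  intro δ hδ j
  ext p
  simp only [mem_inter_iff, mem_empty_iff_false, iff_false]
  rintro ⟨hC, hD⟩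
  -- time of p is at least U j last
  have hUmax : U j (Fin.last (m j)) ≤ T 0 + δ := by
    have := Finset.le_sup' (f := fun j => U j (Fin.last (m j))) (Finset.mem_univ j)
    linarith
  have htime : U j (Fin.last (m j)) ≤ p.2 := by
    rcases hC with hC | hC
    · simp only [mem_iUnion, mem_setOf_eq, reschedule] at hC
      obtain ⟨i, _, h1, _⟩ := hC
      have : T 0 ≤ T i.castSucc := hT.monotone (Fin.zero_le _)
      linarith
    · simp only [mem_setOf_eq, reschedule] at hC
      have : T 0 ≤ T (Fin.last k) := hT.monotone (Fin.zero_le _)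
      linarith
  -- spatial part of p is in some R i
  have hspace : p.1 ∈ ⋃ i : Fin (k + 1), R i := by
    rcases hC with hC | hC
    · simp only [mem_iUnion, mem_setOf_eq, reschedule] at hC ⊢
      obtain ⟨i, h1, _⟩ := hC
      exact ⟨i.castSucc, h1⟩
    · exact mem_iUnion.2 ⟨Fin.last k, hC.1⟩
  -- p must be in the last piece of D_j
  have hlast : p.1 ∈ S j (Fin.last (m j)) := by
    rcases hD with hD | hD
    · simp only [mem_iUnion, mem_setOf_eq] at hD
      obtain ⟨i, _, _, h3⟩ := hD
      have : U j i.succ ≤ U j (Fin.last (m j)) := (hU j).monotone (Fin.le_last _)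
      linarith
    · exact hD.1
  have := hdisj j
  rw [eq_empty_iff_forall_notMem] at this
  exact this p.1 ⟨hspace, hlast⟩
end
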